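/- Consider the optimization problem: maximize (x − x_i)·a over x ∈ R^d subject to ‖x − x_i‖ ≤ ‖x − x_j‖ for all j = 1,…,n and ‖x − (1/n)∑_j x_j‖ ≤ r, where the feasible set is nonempty (it contains x_i when ‖x_i − (1/n)∑_j x_j‖ ≤ r). Then there exists an optimal solution x* lying in span(a, x_1, …, x_n). -/

import Mathlib

theorem stmt_18 (d n : ℕ) (hn : 1 ≤ n) (x : Fin n → EuclideanSpace ℝ (Fin d))
    (a : EuclideanSpace ℝ (Fin d)) (i : Fin n) (r : ℝ)
    (hfeas : ‖x i - ((n : ℝ)⁻¹) • ∑ j, x j‖ ≤ r) :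
    ∃ xs : EuclideanSpace ℝ (Fin d),
      (∀ j, ‖xs - x i‖ ≤ ‖xs - x j‖) ∧
      ‖xs - ((n : ℝ)⁻¹) • ∑ j, x j‖ ≤ r ∧
      (∀ y : EuclideanSpace ℝ (Fin d), (∀ j, ‖y - x i‖ ≤ ‖y - x j‖) →
        ‖y - ((n : ℝ)⁻¹) • ∑ j, x j‖ ≤ r →
        (inner ℝ (y - x i) a : ℝ) ≤ inner ℝ (xs - x i) a) ∧
      xs ∈ Submodule.span ℝ (insert a (Set.range x)) := by
  classical
  set c : EuclideanSpace ℝ (Fin d) := ((n : ℝ)⁻¹) • ∑ j, x j with hc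
  set S : Submodule ℝ (EuclideanSpace ℝ (Fin d)) :=
    Submodule.span ℝ (insert a (Set.range x)) with hS
  have hxS : ∀ j, x j ∈ S := fun j =>
    Submodule.subset_span (Set.mem_insert_of_mem _ ⟨j, rfl⟩)
  have haS : a ∈ S := Submodule.subset_span (Set.mem_insert _ _)
  have hcS : c ∈ S := S.smul_mem _ (Submodule.sum_mem _ fun j _ => hxS j)
  set K : Set (EuclideanSpace ℝ (Fin d)) :=
    {y | y ∈ S ∧ (∀ j, ‖y - x i‖ ≤ ‖y - x j‖) ∧ ‖y - c‖ ≤ r} with hK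
  have hKne : x i ∈ K := ⟨hxS i, fun j => by simp, hfeas⟩
  have hKclosed : IsClosed K := by
    have hKeq : K = (S : Set (EuclideanSpace ℝ (Fin d))) ∩
        ((⋂ j, {y : EuclideanSpace ℝ (Fin d) | ‖y - x i‖ ≤ ‖y - x j‖}) ∩
          {y : EuclideanSpace ℝ (Fin d) | ‖y - c‖ ≤ r}) := by
      ext y
      simp only [hK, Set.mem_setOf_eq, Set.mem_inter_iff, Set.mem_iInter, SetLike.mem_coe]
    rw [hKeq]
    refine (Submodule.closed_of_finiteDimensional S).inter (IsClosed.inter ?_ ?_)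
    · exact isClosed_iInter fun j => isClosed_le
        ((continuous_id.sub continuous_const).norm)
        ((continuous_id.sub continuous_const).norm)
    · exact isClosed_le ((continuous_id.sub continuous_const).norm) continuous_const
  have hKbdd : Bornology.IsBounded K := by
    apply (Metric.isBounded_closedBall (x := c) (r := r)).subset
    intro y hy
    simpa [Metric.mem_closedBall, dist_eq_norm] using hy.2.2
  have hKc : IsCompact K := Metric.isCompact_of_isClosed_isBounded hKclosed hKbdd
  have hcont : Continuous fun y : EuclideanSpace ℝ (Fin d) => (inner ℝ (y - x i) a : ℝ) :=
    Continuous.inner (continuous_id.sub continuous_const) continuous_const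
  obtain ⟨xs, hxsK, hmax⟩ := hKc.exists_isMaxOn ⟨_, hKne⟩ hcont.continuousOn
  refine ⟨xs, hxsK.2.1, hxsK.2.2, ?_, hxsK.1⟩
  intro y hy1 hy2
  set p : EuclideanSpace ℝ (Fin d) := (S.orthogonalProjection y : EuclideanSpace ℝ (Fin d))
    with hp
  have horth : ∀ z ∈ S, (inner ℝ (y - p) z : ℝ) = 0 := fun z hz =>
    S.starProjection_inner_eq_zero y z hz
  have hpS : p ∈ S := (S.orthogonalProjection y).2
  -- Pythagoras
  have hpyth : ∀ z ∈ S, ‖y - z‖ ^ 2 = ‖y - p‖ ^ 2 + ‖p - z‖ ^ 2 := by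
    intro z hz
    have hdecomp : y - z = (y - p) + (p - z) := by abel
    have hi : (inner ℝ (y - p) (p - z) : ℝ) = 0 := horth _ (Submodule.sub_mem S hpS hz)
    rw [hdecomp, norm_add_sq_real, hi]
    ring
  have hsq : ∀ u v : ℝ, 0 ≤ u → 0 ≤ v → u ^ 2 ≤ v ^ 2 → u ≤ v := by
    intro u v hu hv h; nlinarith
  have hpfeas1 : ∀ j, ‖p - x i‖ ≤ ‖p - x j‖ := by
    intro j
    apply hsq _ _ (norm_nonneg _) (norm_nonneg _)
    have h1 := hpyth (x i) (hxS i)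
    have h2 := hpyth (x j) (hxS j)
    have h3 : ‖y - x i‖ ^ 2 ≤ ‖y - x j‖ ^ 2 := by
      have := hy1 j
      nlinarith [norm_nonneg (y - x i), norm_nonneg (y - x j)]
    nlinarith
  have hpfeas2 : ‖p - c‖ ≤ r := by
    have hr : 0 ≤ r := le_trans (norm_nonneg _) hfeas
    apply hsq _ _ (norm_nonneg _) hr
    have h1 := hpyth c hcS
    have h2 : ‖y - c‖ ^ 2 ≤ r ^ 2 := by
      nlinarith [norm_nonneg (y - c)]
    nlinarith [sq_nonneg ‖y - p‖]
  have hpK : p ∈ K := ⟨hpS, hpfeas1, hpfeas2⟩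
  have hobj : (inner ℝ (y - x i) a : ℝ) = inner ℝ (p - x i) a := by
    have hdecomp : y - x i = (y - p) + (p - x i) := by abel
    rw [hdecomp, inner_add_left, horth a haS, zero_add]
  rw [hobj]
  exact hmax hpK
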